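/- arXiv:1705.03512 — 4 statements merged into one kernel-verified Lean document; each statement's English description precedes it below -/
import Mathlib

section
/- Let U be a unitary on K ⊗ H (K, H Hilbert spaces) and suppose there is a net (ξᵢ) of unit vectors in K such that ‖U(ξᵢ ⊗ v) − ξᵢ ⊗ v‖ → 0 for all v ∈ H. Then any weak-* cluster point m of the net of vector states ω_{ξᵢ,ξᵢ} on B(K) is a state M on B(K) satisfying M((id ⊗ ω_{v,v})(U(T ⊗ 1)U*)) = M(T)·‖v‖² for all T ∈ B(K) and all v ∈ H. -/
open scoped ComplexInnerProductSpace InnerProductSpace ComplexOrder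
open Filter Topology

/-!
Pair the vector states with the vectors `ξᵢ ⊗ v`: the slice map turns
`ω_{ξᵢ}((id ⊗ ω_{v,v})(U (A ⊗ 1) U*))` into `⟪U* (ξᵢ ⊗ v), (A ⊗ 1) U* (ξᵢ ⊗ v)⟫`, while
`ω_{ξᵢ}(A) ‖v‖² = ⟪ξᵢ ⊗ v, (A ⊗ 1)(ξᵢ ⊗ v)⟫`. Since `U*` is isometric, these two numbers differ by
at most `2 ‖A ⊗ 1‖ ‖v‖ ‖U (ξᵢ ⊗ v) - ξᵢ ⊗ v‖`, which tends to `0`. The cluster point `M`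
therefore satisfies the invariance identity; it is a state because being unital and positive
are closed conditions that every vector state of a unit vector satisfies.
-/

theorem MapClusterPt.eq_of_tendsto {X α : Type*} [TopologicalSpace X] [T2Space X]
    {F : Filter α} {u : α → X} {x y : X} (hx : MapClusterPt x F u) (hu : Tendsto u F (𝓝 y)) :
    x = y :=
  eq_of_nhds_neBot (hx.clusterPt.mono hu)

section InnerProductSpace

variable {𝕜 E F G : Type*} [RCLike 𝕜] [NormedAddCommGroup E] [InnerProductSpace 𝕜 E]
  [NormedAddCommGroup F] [InnerProductSpace 𝕜 F] [NormedAddCommGroup G] [InnerProductSpace 𝕜 G]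

theorem norm_apply_apply_of_inner_apply_apply (b : E → F → G)
    (hb : ∀ x v x' v', ⟪b x v, b x' v'⟫_𝕜 = ⟪x, x'⟫_𝕜 * ⟪v, v'⟫_𝕜) (x : E) (v : F) :
    ‖b x v‖ = ‖x‖ * ‖v‖ := by
  have hsq : ((‖b x v‖ ^ 2 : ℝ) : 𝕜) = ((‖x‖ * ‖v‖) ^ 2 : ℝ) := by
    push_cast
    rw [← inner_self_eq_norm_sq_to_K, hb, inner_self_eq_norm_sq_to_K, inner_self_eq_norm_sq_to_K,
      mul_pow]
  exact (pow_left_inj₀ (norm_nonneg _) (by positivity) two_ne_zero).mp (RCLike.ofReal_inj.mp hsq)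

theorem norm_inner_apply_self_sub_inner_apply_self_le (C : E →L[𝕜] E) (u w : E) :
    ‖⟪u, C u⟫_𝕜 - ⟪w, C w⟫_𝕜‖ ≤ ‖C‖ * (‖u‖ + ‖w‖) * ‖u - w‖ := by
  have hsplit : ⟪u, C u⟫_𝕜 - ⟪w, C w⟫_𝕜 = ⟪u - w, C u⟫_𝕜 + ⟪w, C (u - w)⟫_𝕜 := by
    rw [inner_sub_left, map_sub, inner_sub_right]
    ring
  calc ‖⟪u, C u⟫_𝕜 - ⟪w, C w⟫_𝕜‖
      ≤ ‖u - w‖ * ‖C u‖ + ‖w‖ * ‖C (u - w)‖ := by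
        rw [hsplit]
        exact (norm_add_le _ _).trans (add_le_add (norm_inner_le_norm _ _) (norm_inner_le_norm _ _))
    _ ≤ ‖u - w‖ * (‖C‖ * ‖u‖) + ‖w‖ * (‖C‖ * ‖u - w‖) := by
        gcongr <;> exact C.le_opNorm _
    _ = ‖C‖ * (‖u‖ + ‖w‖) * ‖u - w‖ := by ring

theorem norm_inner_conj_apply_sub_inner_apply_le [CompleteSpace E] {U : E →L[𝕜] E}
    (hU : U ∈ unitary (E →L[𝕜] E)) (C : E →L[𝕜] E) (w : E) :
    ‖⟪w, (U ∘L C ∘L star U) w⟫_𝕜 - ⟪w, C w⟫_𝕜‖ ≤ 2 * ‖C‖ * ‖w‖ * ‖U w - w‖ := by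
  have hU' := Unitary.star_mem hU
  have hconj : ⟪w, (U ∘L C ∘L star U) w⟫_𝕜 = ⟪star U w, C (star U w)⟫_𝕜 := by
    rw [ContinuousLinearMap.star_eq_adjoint, ContinuousLinearMap.adjoint_inner_left]
    rfl
  have hnorm : ‖star U w‖ = ‖w‖ := ContinuousLinearMap.norm_map_of_mem_unitary hU' w
  have hcancel : star U (U w) = w := by
    simpa using DFunLike.congr_fun (Unitary.star_mul_self_of_mem hU) w
  have hdist : ‖star U w - w‖ = ‖U w - w‖ := by
    calc ‖star U w - w‖ = ‖star U (w - U w)‖ := by rw [map_sub, hcancel]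
      _ = ‖U w - w‖ := by rw [ContinuousLinearMap.norm_map_of_mem_unitary hU', norm_sub_rev]
  calc ‖⟪w, (U ∘L C ∘L star U) w⟫_𝕜 - ⟪w, C w⟫_𝕜‖
      ≤ ‖C‖ * (‖star U w‖ + ‖w‖) * ‖star U w - w‖ := by
        rw [hconj]
        exact norm_inner_apply_self_sub_inner_apply_self_le C _ _
    _ = 2 * ‖C‖ * ‖w‖ * ‖U w - w‖ := by rw [hnorm, hdist]; ring

theorem norm_inner_slice_conj_sub_le [CompleteSpace G] (b : E → F → G)
    (hb : ∀ x v x' v', ⟪b x v, b x' v'⟫_𝕜 = ⟪x, x'⟫_𝕜 * ⟪v, v'⟫_𝕜)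
    {U : G →L[𝕜] G} (hU : U ∈ unitary (G →L[𝕜] G)) {A : E →L[𝕜] E} {C : G →L[𝕜] G}
    (hC : ∀ x v, C (b x v) = b (A x) v) {S : E →L[𝕜] E} {x : E} {v : F}
    (hS : ⟪x, S x⟫_𝕜 = ⟪b x v, (U ∘L C ∘L star U) (b x v)⟫_𝕜) :
    ‖⟪x, S x⟫_𝕜 - ⟪x, A x⟫_𝕜 * (‖v‖ : 𝕜) ^ 2‖ ≤
      2 * ‖C‖ * (‖x‖ * ‖v‖) * ‖U (b x v) - b x v‖ := by
  rw [← norm_apply_apply_of_inner_apply_apply b hb, ← inner_self_eq_norm_sq_to_K, ← hb, ← hC, hS]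
  exact norm_inner_conj_apply_sub_inner_apply_le hU C (b x v)

end InnerProductSpace

theorem cluster_point_of_vector_states_is_invariant_mean_general {K H T : Type*}
    [NormedAddCommGroup K] [InnerProductSpace ℂ K]
    [NormedAddCommGroup H] [InnerProductSpace ℂ H]
    [NormedAddCommGroup T] [InnerProductSpace ℂ T] [CompleteSpace T]
    (tmul : K →L[ℂ] H →L[ℂ] T)
    (hinner : ∀ x v x' v', ⟪tmul x v, tmul x' v'⟫ = ⟪x, x'⟫ * ⟪v, v'⟫)
    (U : T →L[ℂ] T) (hU : U ∈ unitary (T →L[ℂ] T))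
    -- the amplification `A ↦ A ⊗ 1` and the slice maps `(id ⊗ ω_{v,v})`
    (ampl : (K →L[ℂ] K) → (T →L[ℂ] T))
    (hampl : ∀ A x v, ampl A (tmul x v) = tmul (A x) v)
    (slc : H → (T →L[ℂ] T) → (K →L[ℂ] K))
    (hslc : ∀ v S ξ η, ⟪η, slc v S ξ⟫ = ⟪tmul η v, S (tmul ξ v)⟫)
    -- a net of almost invariant unit vectors
    {ι : Type*} (l : Filter ι) (ξ : ι → K) (hξ : ∀ i, ‖ξ i‖ = 1)
    (hinv : ∀ v : H,
      Filter.Tendsto (fun i => ‖U (tmul (ξ i) v) - tmul (ξ i) v‖) l (nhds 0))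
    -- the net of vector states `ω_{ξᵢ,ξᵢ}` in the weak-* topology...
    (ω : ι → WeakDual ℂ (K →L[ℂ] K))
    (hω : ∀ i (A : K →L[ℂ] K), ω i A = ⟪ξ i, A (ξ i)⟫)
    -- ... and a weak-* cluster point `M` of it
    (M : WeakDual ℂ (K →L[ℂ] K))
    (hM : MapClusterPt M l ω) :
    (M 1 = 1 ∧ ∀ A : K →L[ℂ] K, A.IsPositive → 0 ≤ M A) ∧
    ∀ (A : K →L[ℂ] K) (v : H),
      M (slc v (U ∘L ampl A ∘L star U)) = M A * (‖v‖ : ℂ) ^ 2 := by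
  have hev (A : K →L[ℂ] K) : MapClusterPt (M A) l (fun i => ω i A) :=
    hM.continuousAt_comp (WeakDual.eval_continuous A).continuousAt
  refine ⟨⟨?_, fun A hA => ?_⟩, fun A v => ?_⟩
  · refine (hev 1).eq_of_tendsto (tendsto_const_nhds.congr fun i => ?_)
    simp [hω, inner_self_eq_norm_sq_to_K, hξ]
  · refine isClosed_Ici.mem_of_mapClusterPt (hev A) (Eventually.of_forall fun i => ?_)
    simpa [hω] using hA.inner_nonneg_right (ξ i)
  · generalize hS : slc v (U ∘L ampl A ∘L star U) = S
    have hbound (i : ι) : ‖ω i S - ω i A * (‖v‖ : ℂ) ^ 2‖ ≤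
        2 * ‖ampl A‖ * ‖v‖ * ‖U (tmul (ξ i) v) - tmul (ξ i) v‖ := by
      have h := norm_inner_slice_conj_sub_le (tmul · ·) hinner hU (hampl A)
        (hS ▸ hslc v _ (ξ i) (ξ i))
      rw [hξ, one_mul] at h
      rw [hω, hω]
      exact h
    have hlim : Tendsto (fun i => ω i S - ω i A * (‖v‖ : ℂ) ^ 2) l (𝓝 0) :=
      squeeze_zero_norm hbound (by simpa using (hinv v).const_mul (2 * ‖ampl A‖ * ‖v‖))
    have hclu : MapClusterPt (M S - M A * (‖v‖ : ℂ) ^ 2) l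
        (fun i => ω i S - ω i A * (‖v‖ : ℂ) ^ 2) :=
      hM.continuousAt_comp (f := fun φ : WeakDual ℂ (K →L[ℂ] K) => φ S - φ A * (‖v‖ : ℂ) ^ 2)
        ((WeakDual.eval_continuous S).sub
          ((WeakDual.eval_continuous A).mul continuous_const)).continuousAt
    exact sub_eq_zero.mp (hclu.eq_of_tendsto hlim)

/-- Let `U` be a unitary on `K ⊗ H` admitting a net `(ξᵢ)` of almost
invariant unit vectors in `K`.  Then every weak-* cluster point `M` of the net of
vector states `ω_{ξᵢ,ξᵢ}` on `B(K)` is a state satisfying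
`M((id ⊗ ω_{v,v})(U (T ⊗ 1) U*)) = M(T)·‖v‖²` for all `T ∈ B(K)` and `v ∈ H`. -/
theorem cluster_point_of_vector_states_is_invariant_mean {K H T : Type*}
    [NormedAddCommGroup K] [InnerProductSpace ℂ K] [CompleteSpace K]
    [NormedAddCommGroup H] [InnerProductSpace ℂ H] [CompleteSpace H]
    [NormedAddCommGroup T] [InnerProductSpace ℂ T] [CompleteSpace T]
    (tmul : K →L[ℂ] H →L[ℂ] T)
    (hinner : ∀ x v x' v', ⟪tmul x v, tmul x' v'⟫ = ⟪x, x'⟫ * ⟪v, v'⟫)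
    (hdense : Dense ((Submodule.span ℂ
      (Set.range fun p : K × H => tmul p.1 p.2) : Submodule ℂ T) : Set T))
    (U : T →L[ℂ] T) (hU : U ∈ unitary (T →L[ℂ] T))
    -- the amplification `A ↦ A ⊗ 1` and the slice maps `(id ⊗ ω_{v,v})`
    (ampl : (K →L[ℂ] K) → (T →L[ℂ] T))
    (hampl : ∀ A x v, ampl A (tmul x v) = tmul (A x) v)
    (slc : H → (T →L[ℂ] T) → (K →L[ℂ] K))
    (hslc : ∀ v S ξ η, ⟪η, slc v S ξ⟫ = ⟪tmul η v, S (tmul ξ v)⟫)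
    -- a net of almost invariant unit vectors
    {ι : Type*} (l : Filter ι) [l.NeBot] (ξ : ι → K) (hξ : ∀ i, ‖ξ i‖ = 1)
    (hinv : ∀ v : H,
      Filter.Tendsto (fun i => ‖U (tmul (ξ i) v) - tmul (ξ i) v‖) l (nhds 0))
    -- the net of vector states `ω_{ξᵢ,ξᵢ}` in the weak-* topology...
    (ω : ι → WeakDual ℂ (K →L[ℂ] K))
    (hω : ∀ i (A : K →L[ℂ] K), ω i A = ⟪ξ i, A (ξ i)⟫)
    -- ... and a weak-* cluster point `M` of it
    (M : WeakDual ℂ (K →L[ℂ] K))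
    (hM : MapClusterPt M l ω) :
    (M 1 = 1 ∧ ∀ A : K →L[ℂ] K, A.IsPositive → 0 ≤ M A) ∧
    ∀ (A : K →L[ℂ] K) (v : H),
      M (slc v (U ∘L ampl A ∘L star U)) = M A * (‖v‖ : ℂ) ^ 2 :=
  cluster_point_of_vector_states_is_invariant_mean_general tmul hinner U hU ampl hampl slc hslc l ξ
    hξ hinv ω hω M hM
end

section
/- Let K, H be Hilbert spaces and U a unitary on K ⊗ H. If there exists a net (ξᵢ) of unit vectors in K with ‖U(ξᵢ ⊗ v) − ξᵢ ⊗ v‖ → 0 for every v ∈ H, then also ‖U*(ξᵢ ⊗ v) − ξᵢ ⊗ v‖ → 0 for every v ∈ H. -/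
open scoped ComplexInnerProductSpace

namespace ContinuousLinearMap

variable {𝕜 E : Type*} [RCLike 𝕜] [NormedAddCommGroup E] [InnerProductSpace 𝕜 E] [CompleteSpace E]

theorem norm_star_apply_sub_self_of_mem_unitary {u : E →L[𝕜] E} (hu : u ∈ unitary (E →L[𝕜] E))
    (x : E) : ‖star u x - x‖ = ‖u x - x‖ := by
  have hu_star : u (star u x) = x := DFunLike.congr_fun (Unitary.mul_star_self_of_mem hu) x
  calc ‖star u x - x‖ = ‖u (star u x - x)‖ := (norm_map_of_mem_unitary hu _).symm
    _ = ‖x - u x‖ := by rw [map_sub, hu_star]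
    _ = ‖u x - x‖ := norm_sub_rev _ _

end ContinuousLinearMap

theorem almost_invariant_vectors_for_adjoint_general {K H T : Type*}
    [NormedAddCommGroup K] [InnerProductSpace ℂ K]
    [NormedAddCommGroup H] [InnerProductSpace ℂ H]
    [NormedAddCommGroup T] [InnerProductSpace ℂ T] [CompleteSpace T]
    -- `tmul x v` models the elementary tensor `x ⊗ v` in `K ⊗ H`
    (tmul : K →L[ℂ] H →L[ℂ] T)
    -- a unitary `U` on `K ⊗ H`
    (U : T →L[ℂ] T) (hU : U ∈ unitary (T →L[ℂ] T))
    -- a net of unit vectors in `K`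
    {ι : Type*} (l : Filter ι) (ξ : ι → K)
    (hinv : ∀ v : H,
      Filter.Tendsto (fun i => ‖U (tmul (ξ i) v) - tmul (ξ i) v‖) l (nhds 0)) :
    ∀ v : H,
      Filter.Tendsto (fun i => ‖(star U) (tmul (ξ i) v) - tmul (ξ i) v‖) l (nhds 0) := by
  simpa only [ContinuousLinearMap.norm_star_apply_sub_self_of_mem_unitary hU] using hinv

/-- If `U` is a unitary on `K ⊗ H` and `(ξᵢ)` is a net of unit vectors of `K`
with `‖U(ξᵢ ⊗ v) − ξᵢ ⊗ v‖ → 0` for every `v ∈ H`, then also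
`‖U*(ξᵢ ⊗ v) − ξᵢ ⊗ v‖ → 0` for every `v ∈ H`. -/
theorem almost_invariant_vectors_for_adjoint {K H T : Type*}
    [NormedAddCommGroup K] [InnerProductSpace ℂ K] [CompleteSpace K]
    [NormedAddCommGroup H] [InnerProductSpace ℂ H] [CompleteSpace H]
    [NormedAddCommGroup T] [InnerProductSpace ℂ T] [CompleteSpace T]
    -- `tmul x v` models the elementary tensor `x ⊗ v` in `K ⊗ H`
    (tmul : K →L[ℂ] H →L[ℂ] T)
    (hinner : ∀ x v x' v', ⟪tmul x v, tmul x' v'⟫ = ⟪x, x'⟫ * ⟪v, v'⟫)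
    (hdense : Dense ((Submodule.span ℂ
      (Set.range fun p : K × H => tmul p.1 p.2) : Submodule ℂ T) : Set T))
    -- a unitary `U` on `K ⊗ H`
    (U : T →L[ℂ] T) (hU : U ∈ unitary (T →L[ℂ] T))
    -- a net of unit vectors in `K`
    {ι : Type*} (l : Filter ι) [l.NeBot] (ξ : ι → K) (hξ : ∀ i, ‖ξ i‖ = 1)
    (hinv : ∀ v : H,
      Filter.Tendsto (fun i => ‖U (tmul (ξ i) v) - tmul (ξ i) v‖) l (nhds 0)) :
    ∀ v : H,
      Filter.Tendsto (fun i => ‖(star U) (tmul (ξ i) v) - tmul (ξ i) v‖) l (nhds 0) :=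
  almost_invariant_vectors_for_adjoint_general tmul U hU l ξ hinv
end

section
/- Let K, H be Hilbert spaces and U a unitary on K ⊗ H. If there exists a net of unit vectors (ξᵢ) in K such that ‖U(ξᵢ ⊗ v) − ξᵢ ⊗ v‖ → 0 for all v ∈ H, then there exists a state ψ on B(K) such that ψ((id ⊗ ω_{v,w})(U)) = ⟨v, w⟩ for all v, w ∈ H, where (id ⊗ ω_{v,w})(U) ∈ B(K) is the slice of U. -/
/-!
The vector states `A ↦ ⟪ξᵢ, A ξᵢ⟫` lie in the unit ball of the dual of `B(K)`, which is weak-*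
compact (Banach–Alaoglu), so they converge weak-* along an ultrafilter finer than the given
filter. Being unital and positive are weak-* closed conditions, so the limit `ψ` is a state. On
the slice, `⟪ξᵢ, (id ⊗ ω_{v,w})(U) ξᵢ⟫ = ⟪ξᵢ ⊗ w, U(ξᵢ ⊗ v)⟫` differs from
`⟪w, v⟫ = ⟪ξᵢ ⊗ w, ξᵢ ⊗ v⟫` by at most `‖tmul‖ ‖w‖ ‖U(ξᵢ ⊗ v) - ξᵢ ⊗ v‖ → 0`.
-/

open scoped ComplexInnerProductSpace ComplexOrder InnerProductSpace
open Filter Topology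

theorem StrongDual.exists_ultrafilter_le_tendsto_apply_of_norm_le
    {𝕜 E ι : Type*} [RCLike 𝕜] [NormedAddCommGroup E] [NormedSpace 𝕜 E]
    (l : Filter ι) [l.NeBot] (φ : ι → StrongDual 𝕜 E) {r : ℝ} (hφ : ∀ i, ‖φ i‖ ≤ r) :
    ∃ u : Ultrafilter ι, ↑u ≤ l ∧
      ∃ ψ : StrongDual 𝕜 E, ∀ x, Tendsto (fun i => φ i x) u (𝓝 (ψ x)) := by
  obtain ⟨u, hul⟩ := exists_ultrafilter_le l
  have hball : ↑(u.map ((WeakDual.toStrongDual (𝕜 := 𝕜) (E := E)).symm ∘ φ)) ≤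
      𝓟 (WeakDual.toStrongDual (𝕜 := 𝕜) (E := E) ⁻¹' Metric.closedBall 0 r) :=
    le_principal_iff.mpr <| Ultrafilter.mem_map.mpr <| univ_mem' fun i => by simpa using hφ i
  obtain ⟨ψ, -, hψ⟩ := (WeakDual.isCompact_closedBall 0 r).ultrafilter_le_nhds _ hball
  exact ⟨u, hul, ψ, fun x => ((WeakDual.eval_continuous x).tendsto ψ).comp hψ⟩

section VectorState

variable {𝕜 E : Type*} [RCLike 𝕜] [NormedAddCommGroup E] [InnerProductSpace 𝕜 E]

variable (𝕜) in
noncomputable def vectorState (x : E) : StrongDual 𝕜 (E →L[𝕜] E) :=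
  innerSL 𝕜 x ∘L ContinuousLinearMap.apply 𝕜 E x

@[simp]
theorem vectorState_apply (x : E) (A : E →L[𝕜] E) : vectorState 𝕜 x A = ⟪x, A x⟫_𝕜 := rfl

theorem norm_vectorState_le (x : E) : ‖vectorState 𝕜 x‖ ≤ ‖x‖ ^ 2 :=
  ContinuousLinearMap.opNorm_le_bound _ (by positivity) fun A => calc
    ‖⟪x, A x⟫_𝕜‖ ≤ ‖x‖ * ‖A x‖ := norm_inner_le_norm _ _
    _ ≤ ‖x‖ * (‖A‖ * ‖x‖) := by gcongr; exact A.le_opNorm x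
    _ = ‖x‖ ^ 2 * ‖A‖ := by ring

theorem vectorState_one {x : E} (hx : ‖x‖ = 1) : vectorState 𝕜 x 1 = 1 :=
  inner_self_eq_one_of_norm_eq_one hx

theorem vectorState_nonneg (x : E) {A : E →L[𝕜] E} (hA : A.IsPositive) :
    0 ≤ vectorState 𝕜 x A :=
  hA.toLinearMap.inner_nonneg_right x

end VectorState

theorem tendsto_vectorState_of_tendsto_norm_sub
    {𝕜 K H T ι : Type*} [RCLike 𝕜]
    [NormedAddCommGroup K] [InnerProductSpace 𝕜 K]
    [NormedAddCommGroup H] [InnerProductSpace 𝕜 H]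
    [NormedAddCommGroup T] [InnerProductSpace 𝕜 T]
    (tmul : K →L[𝕜] H →L[𝕜] T)
    (hinner : ∀ x v x' v', ⟪tmul x v, tmul x' v'⟫_𝕜 = ⟪x, x'⟫_𝕜 * ⟪v, v'⟫_𝕜)
    (U : T →L[𝕜] T) {S : K →L[𝕜] K} {v w : H}
    (hS : ∀ x, ⟪x, S x⟫_𝕜 = ⟪tmul x w, U (tmul x v)⟫_𝕜)
    {l : Filter ι} {ξ : ι → K} (hξ : ∀ i, ‖ξ i‖ = 1)
    (hinv : Tendsto (fun i => ‖U (tmul (ξ i) v) - tmul (ξ i) v‖) l (𝓝 0)) :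
    Tendsto (fun i => vectorState 𝕜 (ξ i) S) l (𝓝 ⟪w, v⟫_𝕜) := by
  have hsplit : ∀ i, vectorState 𝕜 (ξ i) S =
      ⟪w, v⟫_𝕜 + ⟪tmul (ξ i) w, U (tmul (ξ i) v) - tmul (ξ i) v⟫_𝕜 := fun i => by
    rw [vectorState_apply, hS, inner_sub_right, hinner, inner_self_eq_one_of_norm_eq_one (hξ i)]
    ring
  have hbound : ∀ i, ‖⟪tmul (ξ i) w, U (tmul (ξ i) v) - tmul (ξ i) v⟫_𝕜‖ ≤
      ‖tmul‖ * ‖w‖ * ‖U (tmul (ξ i) v) - tmul (ξ i) v‖ := fun i => by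
    refine (norm_inner_le_norm _ _).trans (mul_le_mul_of_nonneg_right ?_ (norm_nonneg _))
    simpa [hξ i] using tmul.le_opNorm₂ (ξ i) w
  have herr := squeeze_zero_norm hbound (by simpa using hinv.const_mul (‖tmul‖ * ‖w‖))
  simpa [hsplit] using tendsto_const_nhds.add herr

theorem almost_invariant_gives_state_general {K H T : Type*}
    [NormedAddCommGroup K] [InnerProductSpace ℂ K]
    [NormedAddCommGroup H] [InnerProductSpace ℂ H]
    [NormedAddCommGroup T] [InnerProductSpace ℂ T]
    (tmul : K →L[ℂ] H →L[ℂ] T)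
    (hinner : ∀ x v x' v', ⟪tmul x v, tmul x' v'⟫ = ⟪x, x'⟫ * ⟪v, v'⟫)
    (U : T →L[ℂ] T)
    -- the slice maps `(id ⊗ ω_{v,w})`
    (slc : H → H → (T →L[ℂ] T) → (K →L[ℂ] K))
    (hslc : ∀ v w S ξ η, ⟪η, slc v w S ξ⟫ = ⟪tmul η w, S (tmul ξ v)⟫)
    -- a net of almost invariant unit vectors
    {ι : Type*} (l : Filter ι) [l.NeBot] (ξ : ι → K) (hξ : ∀ i, ‖ξ i‖ = 1)
    (hinv : ∀ v : H,
      Filter.Tendsto (fun i => ‖U (tmul (ξ i) v) - tmul (ξ i) v‖) l (nhds 0)) :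
    ∃ ψ : (K →L[ℂ] K) →L[ℂ] ℂ,
      ψ 1 = 1 ∧ (∀ A : K →L[ℂ] K, A.IsPositive → 0 ≤ (ψ A).re ∧ (ψ A).im = 0) ∧
      ∀ v w : H, ψ (slc v w U) = ⟪w, v⟫ := by
  obtain ⟨u, hul, ψ, hψ⟩ := StrongDual.exists_ultrafilter_le_tendsto_apply_of_norm_le l (r := 1)
    (fun i => vectorState ℂ (ξ i)) fun i => (norm_vectorState_le (ξ i)).trans_eq (by simp [hξ i])
  refine ⟨ψ, ?_, fun A hA => ?_, fun v w => ?_⟩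
  · exact tendsto_nhds_unique (hψ 1) (by simp only [vectorState_one (hξ _), tendsto_const_nhds])
  · have hψA : 0 ≤ ψ A :=
      isClosed_Ici.mem_of_tendsto (hψ A) (.of_forall fun i => vectorState_nonneg (ξ i) hA)
    exact (Complex.nonneg_iff.mp hψA).imp_right Eq.symm
  · exact tendsto_nhds_unique (hψ _) <| (tendsto_vectorState_of_tendsto_norm_sub tmul hinner U
      (fun x => hslc v w U x x) hξ (hinv v)).mono_left hul

/-- If a unitary `U` on `K ⊗ H` admits a net `(ξᵢ)` of almost invariant unit
vectors in `K`, then there exists a state `ψ` on `B(K)` with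
`ψ((id ⊗ ω_{v,w})(U)) = ⟨v, w⟩` for all `v, w ∈ H`.
(Here `⟨v,w⟩` is conjugate-linear in the second variable, i.e. it is `⟪w, v⟫` in
Mathlib's convention, and `(id ⊗ ω_{v,w})(U)` is the slice of `U`, characterised by
`⟨Sξ, η⟩ = ⟨U(ξ ⊗ v), η ⊗ w⟩`.) -/
theorem almost_invariant_gives_state {K H T : Type*}
    [NormedAddCommGroup K] [InnerProductSpace ℂ K] [CompleteSpace K]
    [NormedAddCommGroup H] [InnerProductSpace ℂ H] [CompleteSpace H]
    [NormedAddCommGroup T] [InnerProductSpace ℂ T] [CompleteSpace T]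
    (tmul : K →L[ℂ] H →L[ℂ] T)
    (hinner : ∀ x v x' v', ⟪tmul x v, tmul x' v'⟫ = ⟪x, x'⟫ * ⟪v, v'⟫)
    (hdense : Dense ((Submodule.span ℂ
      (Set.range fun p : K × H => tmul p.1 p.2) : Submodule ℂ T) : Set T))
    (U : T →L[ℂ] T) (hU : U ∈ unitary (T →L[ℂ] T))
    -- the slice maps `(id ⊗ ω_{v,w})`
    (slc : H → H → (T →L[ℂ] T) → (K →L[ℂ] K))
    (hslc : ∀ v w S ξ η, ⟪η, slc v w S ξ⟫ = ⟪tmul η w, S (tmul ξ v)⟫)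
    -- a net of almost invariant unit vectors
    {ι : Type*} (l : Filter ι) [l.NeBot] (ξ : ι → K) (hξ : ∀ i, ‖ξ i‖ = 1)
    (hinv : ∀ v : H,
      Filter.Tendsto (fun i => ‖U (tmul (ξ i) v) - tmul (ξ i) v‖) l (nhds 0)) :
    ∃ ψ : (K →L[ℂ] K) →L[ℂ] ℂ,
      ψ 1 = 1 ∧ (∀ A : K →L[ℂ] K, A.IsPositive → 0 ≤ (ψ A).re ∧ (ψ A).im = 0) ∧
      ∀ v w : H, ψ (slc v w U) = ⟪w, v⟫ :=
  almost_invariant_gives_state_general tmul hinner U slc hslc l ξ hξ hinv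
end

section
/- Let K, H be Hilbert spaces, U a unitary on K ⊗ H, and suppose there is a net of unit vectors (ζᵢ) in K ⊗ K̄ such that ‖(U₁₃ Ū₂₃)(ζᵢ ⊗ v) − ζᵢ ⊗ v‖ → 0 for all v ∈ H (i.e., the tensor product of U with a contragredient copy Ū admits almost invariant vectors). Then any weak-* cluster point m of the states ω_{ζᵢ,ζᵢ} on B(K ⊗ K̄) satisfies m((id ⊗ ω_{v,v})((U₁₃Ū₂₃)(T ⊗ 1)(U₁₃Ū₂₃)*)) = ‖v‖² m(T) for all T ∈ B(K ⊗ K̄), v ∈ H. -/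
open scoped ComplexInnerProductSpace ComplexOrder

/-!
`W = U₁₃Ū₂₃` is an isometry: on elementary tensors, whose span is dense, each leg acts through
the unitary `U` or `Ū`. Put `ξᵢ = ζᵢ ⊗ v`. The vector state at `ζᵢ` of the sliced operator is
`⟪W*ξᵢ, (T ⊗ 1) W*ξᵢ⟫`, while `‖v‖² ω_{ζᵢ}(T) = ⟪ξᵢ, (T ⊗ 1) ξᵢ⟫`. For an isometry
`‖W*ξ - ξ‖ = ‖W*(ξ - Wξ)‖ ≤ ‖Wξ - ξ‖`, so the difference of the two states tends to `0` along
the net of almost invariant vectors, hence vanishes at every weak-* cluster point.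
-/

open Filter Topology Set Submodule
open scoped InnerProductSpace

section DenseSpan

variable {𝕜 E F G : Type*} [NontriviallyNormedField 𝕜]
  [NormedAddCommGroup E] [NormedSpace 𝕜 E] [NormedAddCommGroup F] [NormedSpace 𝕜 F]
  [NormedAddCommGroup G] [NormedSpace 𝕜 G]

theorem Submodule.eq_top_of_isClosed_of_subset {N : Submodule 𝕜 E} (hN : IsClosed (N : Set E))
    {s : Set E} (hs : Dense (span 𝕜 s : Set E)) (hsN : s ⊆ N) : N = ⊤ := by
  have hN' : Dense (N : Set E) := hs.mono (span_le.2 hsN)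
  rw [← coe_eq_univ, ← hN.closure_eq, hN'.closure_eq]

theorem dense_span_image2 (f : E →L[𝕜] F →L[𝕜] G) {s : Set E} {t : Set F}
    (hs : Dense (span 𝕜 s : Set E)) (ht : Dense (span 𝕜 t : Set F))
    (hf : Dense (span 𝕜 (range fun p : E × F => f p.1 p.2) : Set G)) :
    Dense (span 𝕜 (image2 (fun x y => f x y) s t) : Set G) := by
  set M := (span 𝕜 (image2 (fun x y => f x y) s t)).topologicalClosure
  have hM : IsClosed (M : Set G) := isClosed_topologicalClosure _
  have hleft : ∀ y ∈ t, ∀ x, f x y ∈ M := fun y hy x => by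
    have := eq_top_of_isClosed_of_subset (N := M.comap (f.flip y : E →ₗ[𝕜] G))
      (hM.preimage (f.flip y).continuous) hs
      fun x hx => le_topologicalClosure _ (subset_span (mem_image2_of_mem hx hy))
    exact eq_top_iff'.1 this x
  have hmem : ∀ x y, f x y ∈ M := fun x y => by
    have := eq_top_of_isClosed_of_subset (N := M.comap (f x : F →ₗ[𝕜] G))
      (hM.preimage (f x).continuous) ht fun y hy => hleft y hy x
    exact eq_top_iff'.1 this y
  rw [dense_iff_topologicalClosure_eq_top]
  exact eq_top_of_isClosed_of_subset hM hf (by rintro _ ⟨⟨x, y⟩, rfl⟩; exact hmem x y)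

end DenseSpan

section InnerProduct

variable {𝕜 E F : Type*} [RCLike 𝕜] [NormedAddCommGroup E] [InnerProductSpace 𝕜 E]
  [NormedAddCommGroup F] [InnerProductSpace 𝕜 F]

theorem inner_map_map_eq_of_dense_span {s : Set E} (hs : Dense (span 𝕜 s : Set E))
    {A B : E →L[𝕜] F} {c : 𝕜} (h : ∀ x ∈ s, ∀ y ∈ s, ⟪A x, B y⟫_𝕜 = c * ⟪x, y⟫_𝕜) (x y : E) :
    ⟪A x, B y⟫_𝕜 = c * ⟪x, y⟫_𝕜 := by
  have hleft : ∀ x ∈ s, ∀ y, ⟪A x, B y⟫_𝕜 = c * ⟪x, y⟫_𝕜 := fun x hx => by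
    have : innerSL 𝕜 (A x) ∘L B = c • innerSL 𝕜 x :=
      ContinuousLinearMap.ext_on hs fun y hy => by simpa using h x hx y hy
    exact fun y => by simpa using congr($this y)
  have : innerSL 𝕜 (B y) ∘L A = starRingEnd 𝕜 c • innerSL 𝕜 y :=
    ContinuousLinearMap.ext_on hs fun x hx => by
      simpa [inner_conj_symm] using congr(starRingEnd 𝕜 $(hleft x hx y))
  simpa [inner_conj_symm] using congr(starRingEnd 𝕜 ($this x))

variable {G X Y : Type*} [NormedAddCommGroup G] [InnerProductSpace 𝕜 G]
  [NormedAddCommGroup X] [InnerProductSpace 𝕜 X] [NormedAddCommGroup Y] [InnerProductSpace 𝕜 Y]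

theorem inner_apply_apply_eq_of_dense_span {p : G →L[𝕜] X →L[𝕜] Y} {s : Set G}
    (hs : Dense (span 𝕜 s : Set G))
    (h : ∀ g ∈ s, ∀ g' ∈ s, ∀ x x', ⟪p g x, p g' x'⟫_𝕜 = ⟪g, g'⟫_𝕜 * ⟪x, x'⟫_𝕜)
    (g g' : G) (x x' : X) : ⟪p g x, p g' x'⟫_𝕜 = ⟪g, g'⟫_𝕜 * ⟪x, x'⟫_𝕜 :=
  (inner_map_map_eq_of_dense_span (A := p.flip x) (B := p.flip x') hs
    (fun g hg g' hg' => (h g hg g' hg' x x').trans (mul_comm _ _)) g g').trans (mul_comm _ _)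

theorem inner_map_map_of_intertwining {p : G →L[𝕜] X →L[𝕜] Y} {s : Set G}
    (hs : Dense (span 𝕜 s : Set G))
    (hp : ∀ g ∈ s, ∀ g' ∈ s, ∀ x x', ⟪p g x, p g' x'⟫_𝕜 = ⟪g, g'⟫_𝕜 * ⟪x, x'⟫_𝕜)
    {t : Set Y} (ht : Dense (span 𝕜 t : Set Y)) (htp : t ⊆ range fun q : G × X => p q.1 q.2)
    {V : G →L[𝕜] G} (hV : ∀ g g', ⟪V g, V g'⟫_𝕜 = ⟪g, g'⟫_𝕜)
    {V' : Y →L[𝕜] Y} (hV' : ∀ g x, V' (p g x) = p (V g) x) (y y' : Y) :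
    ⟪V' y, V' y'⟫_𝕜 = ⟪y, y'⟫_𝕜 := by
  have hp' := inner_apply_apply_eq_of_dense_span hs hp
  refine (inner_map_map_eq_of_dense_span (ht.mono (span_mono htp)) (c := 1) ?_ y y').trans
    (one_mul _)
  rintro _ ⟨⟨g, x⟩, rfl⟩ _ ⟨⟨g', x'⟩, rfl⟩
  rw [hV', hV', hp', hp', hV, one_mul]

theorem norm_apply_apply_eq_mul_norm_of_inner {f : E →L[𝕜] F →L[𝕜] G}
    (hf : ∀ x y x' y', ⟪f x y, f x' y'⟫_𝕜 = ⟪x, x'⟫_𝕜 * ⟪y, y'⟫_𝕜) (x : E) (y : F) :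
    ‖f x y‖ = ‖x‖ * ‖y‖ := by
  have h := hf x y x y
  simp only [inner_self_eq_norm_sq_to_K] at h
  norm_cast at h
  rwa [← mul_pow, sq_eq_sq₀ (norm_nonneg _) (by positivity)] at h

end InnerProduct

section Isometry

variable {𝕜 E : Type*} [RCLike 𝕜] [NormedAddCommGroup E] [InnerProductSpace 𝕜 E]

theorem norm_inner_map_self_sub_le (T : E →L[𝕜] E) (x y : E) :
    ‖⟪x, T x⟫_𝕜 - ⟪y, T y⟫_𝕜‖ ≤ ‖T‖ * (‖x‖ + ‖y‖) * ‖x - y‖ := by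
  have : ⟪x, T x⟫_𝕜 - ⟪y, T y⟫_𝕜 = ⟪x - y, T x⟫_𝕜 + ⟪y, T (x - y)⟫_𝕜 := by
    rw [inner_sub_left, map_sub, inner_sub_right]; ring
  rw [this]
  calc _ ≤ ‖x - y‖ * ‖T x‖ + ‖y‖ * ‖T (x - y)‖ :=
        (norm_add_le _ _).trans (add_le_add (norm_inner_le_norm _ _) (norm_inner_le_norm _ _))
    _ ≤ ‖x - y‖ * (‖T‖ * ‖x‖) + ‖y‖ * (‖T‖ * ‖x - y‖) := by
        gcongr <;> exact T.le_opNorm _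
    _ = ‖T‖ * (‖x‖ + ‖y‖) * ‖x - y‖ := by ring

variable [CompleteSpace E]

theorem norm_star_le_one_of_star_mul_self_eq_one {W : E →L[𝕜] E} (hW : star W * W = 1) :
    ‖star W‖ ≤ 1 := by
  have hnorm := (W.norm_map_iff_adjoint_comp_self).2 hW
  rw [ContinuousLinearMap.star_eq_adjoint, LinearIsometryEquiv.norm_map]
  exact W.opNorm_le_bound zero_le_one fun x => by rw [hnorm, one_mul]

theorem norm_star_apply_sub_le_of_star_mul_self_eq_one {W : E →L[𝕜] E} (hW : star W * W = 1)
    (x : E) : ‖star W x - x‖ ≤ ‖W x - x‖ := by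
  have : star W x - x = star W (x - W x) := by
    rw [map_sub, ← mul_apply_eq_comp, hW, one_apply_eq_self]
  rw [this, norm_sub_rev (W x)]
  simpa using (star W).le_of_opNorm_le (norm_star_le_one_of_star_mul_self_eq_one hW) (x - W x)

theorem norm_inner_conj_apply_sub_le {W : E →L[𝕜] E} (hW : star W * W = 1) (T : E →L[𝕜] E)
    (x : E) : ‖⟪x, (W ∘L T ∘L star W) x⟫_𝕜 - ⟪x, T x⟫_𝕜‖ ≤ 2 * ‖T‖ * ‖x‖ * ‖W x - x‖ := by
  have hx : ‖star W x‖ ≤ ‖x‖ := by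
    simpa using (star W).le_of_opNorm_le (norm_star_le_one_of_star_mul_self_eq_one hW) x
  have hadj : ⟪x, (W ∘L T ∘L star W) x⟫_𝕜 = ⟪star W x, T (star W x)⟫_𝕜 := by
    rw [ContinuousLinearMap.star_eq_adjoint, ContinuousLinearMap.comp_apply,
      ContinuousLinearMap.comp_apply, ← ContinuousLinearMap.adjoint_inner_left]
  rw [hadj]
  calc _ ≤ ‖T‖ * (‖star W x‖ + ‖x‖) * ‖star W x - x‖ := norm_inner_map_self_sub_le T _ _
    _ ≤ ‖T‖ * (‖x‖ + ‖x‖) * ‖W x - x‖ := by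
        gcongr
        exact norm_star_apply_sub_le_of_star_mul_self_eq_one hW x
    _ = 2 * ‖T‖ * ‖x‖ * ‖W x - x‖ := by ring

theorem tendsto_inner_conj_apply_sub {ι : Type*} {l : Filter ι} {W : E →L[𝕜] E}
    (hW : star W * W = 1) (T : E →L[𝕜] E) {x : ι → E} {C : ℝ} (hx : ∀ i, ‖x i‖ ≤ C)
    (h : Tendsto (fun i => ‖W (x i) - x i‖) l (𝓝 0)) :
    Tendsto (fun i => ⟪x i, (W ∘L T ∘L star W) (x i)⟫_𝕜 - ⟪x i, T (x i)⟫_𝕜) l (𝓝 0) := by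
  refine squeeze_zero_norm (fun i => (norm_inner_conj_apply_sub_le hW T (x i)).trans ?_)
    (by simpa using h.const_mul (2 * ‖T‖ * C))
  gcongr
  exact hx i

end Isometry

theorem MapClusterPt.eq_of_tendsto_comp {ι X Y : Type*} [TopologicalSpace X] [TopologicalSpace Y]
    [T2Space Y] {l : Filter ι} {u : ι → X} {x : X} (hx : MapClusterPt x l u) {f : X → Y}
    (hf : ContinuousAt f x) {y : Y} (h : Tendsto (f ∘ u) l (𝓝 y)) : f x = y :=
  eq_of_nhds_neBot ((hx.continuousAt_comp hf).clusterPt.mono h)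

theorem cluster_state_is_invariant_for_tensor_with_conjugate_general {K Kb H TKH TKbH TP T3 : Type*}
    [NormedAddCommGroup K] [InnerProductSpace ℂ K]
    [NormedAddCommGroup Kb] [InnerProductSpace ℂ Kb]
    [NormedAddCommGroup H] [InnerProductSpace ℂ H]
    [NormedAddCommGroup TKH] [InnerProductSpace ℂ TKH] [CompleteSpace TKH]
    [NormedAddCommGroup TKbH] [InnerProductSpace ℂ TKbH] [CompleteSpace TKbH]
    [NormedAddCommGroup TP] [InnerProductSpace ℂ TP]
    [NormedAddCommGroup T3] [InnerProductSpace ℂ T3] [CompleteSpace T3]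
    -- models of `K ⊗ H`, `K̄ ⊗ H`, `K ⊗ K̄` and `(K ⊗ K̄) ⊗ H`
    (tmulKH : K →L[ℂ] H →L[ℂ] TKH)
    (hinnerKH : ∀ x v x' v', ⟪tmulKH x v, tmulKH x' v'⟫ = ⟪x, x'⟫ * ⟪v, v'⟫)
    (hdenseKH : Dense ((Submodule.span ℂ
      (Set.range fun p : K × H => tmulKH p.1 p.2) : Submodule ℂ TKH) : Set TKH))
    (tmulKbH : Kb →L[ℂ] H →L[ℂ] TKbH)
    (hinnerKbH : ∀ y v y' v', ⟪tmulKbH y v, tmulKbH y' v'⟫ = ⟪y, y'⟫ * ⟪v, v'⟫)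
    (hdenseKbH : Dense ((Submodule.span ℂ
      (Set.range fun p : Kb × H => tmulKbH p.1 p.2) : Submodule ℂ TKbH) : Set TKbH))
    (tmulP : K →L[ℂ] Kb →L[ℂ] TP)
    (hinnerP : ∀ x y x' y', ⟪tmulP x y, tmulP x' y'⟫ = ⟪x, x'⟫ * ⟪y, y'⟫)
    (hdenseP : Dense ((Submodule.span ℂ
      (Set.range fun p : K × Kb => tmulP p.1 p.2) : Submodule ℂ TP) : Set TP))
    (tmulBig : TP →L[ℂ] H →L[ℂ] T3)
    (hinnerBig : ∀ s v s' v', ⟪tmulBig s v, tmulBig s' v'⟫ = ⟪s, s'⟫ * ⟪v, v'⟫)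
    (hdenseBig : Dense ((Submodule.span ℂ
      (Set.range fun p : TP × H => tmulBig p.1 p.2) : Submodule ℂ T3) : Set T3))
    -- `U` and its contragredient `Ub`
    (U : TKH →L[ℂ] TKH) (hU : U ∈ unitary (TKH →L[ℂ] TKH))
    (Ub : TKbH →L[ℂ] TKbH) (hUb : Ub ∈ unitary (TKbH →L[ℂ] TKbH))
    -- the legs `U₁₃`, `Ū₂₃` on `K ⊗ K̄ ⊗ H`
    (p13 : TKH →L[ℂ] Kb →L[ℂ] T3)
    (hp13 : ∀ x v y, p13 (tmulKH x v) y = tmulBig (tmulP x y) v)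
    (p23 : K →L[ℂ] TKbH →L[ℂ] T3)
    (hp23 : ∀ x y v, p23 x (tmulKbH y v) = tmulBig (tmulP x y) v)
    (U13 : T3 →L[ℂ] T3) (hU13 : ∀ t y, U13 (p13 t y) = p13 (U t) y)
    (Ub23 : T3 →L[ℂ] T3) (hUb23 : ∀ x t, Ub23 (p23 x t) = p23 x (Ub t))
    -- amplification `T ↦ T ⊗ 1` and slices `(id ⊗ ω_{v,v})`
    (ampl : (TP →L[ℂ] TP) → (T3 →L[ℂ] T3))
    (hampl : ∀ S t v, ampl S (tmulBig t v) = tmulBig (S t) v)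
    (slc : H → (T3 →L[ℂ] T3) → (TP →L[ℂ] TP))
    (hslc : ∀ v S t s, ⟪s, slc v S t⟫ = ⟪tmulBig s v, S (tmulBig t v)⟫)
    -- a net of almost invariant unit vectors for `W = U₁₃Ū₂₃`
    {ι : Type*} (l : Filter ι) (ζ : ι → TP) (hζ : ∀ i, ‖ζ i‖ = 1)
    (hinv : ∀ v : H, Filter.Tendsto
      (fun i => ‖(U13 ∘L Ub23) (tmulBig (ζ i) v) - tmulBig (ζ i) v‖) l (nhds 0))
    -- a weak-* cluster point `m` of the vector states `ω_{ζᵢ,ζᵢ}`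
    (ω : ι → WeakDual ℂ (TP →L[ℂ] TP))
    (hω : ∀ i (S : TP →L[ℂ] TP), ω i S = ⟪ζ i, S (ζ i)⟫)
    (m : WeakDual ℂ (TP →L[ℂ] TP))
    (hm : MapClusterPt m l ω) :
    ∀ (S : TP →L[ℂ] TP) (v : H),
      m (slc v ((U13 ∘L Ub23) ∘L ampl S ∘L star (U13 ∘L Ub23)))
        = (‖v‖ : ℂ) ^ 2 * m S := by
  have hdenseElementary : Dense (span ℂ (image2 (fun s v => tmulBig s v)
      (range fun p : K × Kb => tmulP p.1 p.2) univ) : Set T3) :=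
    dense_span_image2 tmulBig hdenseP (by simp) hdenseBig
  have isom13 := inner_map_map_of_intertwining (p := p13) hdenseKH
    (by
      rintro _ ⟨⟨x, v⟩, rfl⟩ _ ⟨⟨x', v'⟩, rfl⟩ y y'
      simp only [hp13, hinnerBig, hinnerP, hinnerKH]; ring)
    hdenseElementary (by rintro _ ⟨_, ⟨⟨x, y⟩, rfl⟩, v, -, rfl⟩; exact ⟨(tmulKH x v, y), hp13 x v y⟩)
    (ContinuousLinearMap.inner_map_map_of_mem_unitary hU) hU13
  have isom23 := inner_map_map_of_intertwining (p := p23.flip) hdenseKbH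
    (by
      rintro _ ⟨⟨y, v⟩, rfl⟩ _ ⟨⟨y', v'⟩, rfl⟩ x x'
      simp only [ContinuousLinearMap.flip_apply, hp23, hinnerBig, hinnerP, hinnerKbH]; ring)
    hdenseElementary (by rintro _ ⟨_, ⟨⟨x, y⟩, rfl⟩, v, -, rfl⟩; exact ⟨(tmulKbH y v, x), hp23 x y v⟩)
    (ContinuousLinearMap.inner_map_map_of_mem_unitary hUb) fun t x => hUb23 x t
  set W := U13 ∘L Ub23
  have hW : star W * W = 1 := W.inner_map_map_iff_adjoint_comp_self.1 fun ξ η => by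
    simp only [W, ContinuousLinearMap.comp_apply, isom13, isom23]
  intro S v
  have hnorm : ∀ i, ‖tmulBig (ζ i) v‖ = ‖v‖ := fun i => by
    rw [norm_apply_apply_eq_mul_norm_of_inner hinnerBig, hζ, one_mul]
  have hstate : ∀ i, ω i (slc v (W ∘L ampl S ∘L star W)) - ω i ((‖v‖ : ℂ) ^ 2 • S)
      = ⟪tmulBig (ζ i) v, (W ∘L ampl S ∘L star W) (tmulBig (ζ i) v)⟫
        - ⟪tmulBig (ζ i) v, ampl S (tmulBig (ζ i) v)⟫ := fun i => by
    rw [hω, hω, hslc, hampl, hinnerBig, inner_self_eq_norm_sq_to_K, smul_apply, inner_smul_right,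
      mul_comm]
    rfl
  have := hm.eq_of_tendsto_comp
    ((WeakDual.eval_continuous _).sub (WeakDual.eval_continuous _)).continuousAt
    ((tendsto_inner_conj_apply_sub hW (ampl S) (fun i => (hnorm i).le) (hinv v)).congr
      fun i => (hstate i).symm)
  rwa [Pi.sub_apply, sub_eq_zero, map_smul, smul_eq_mul] at this

/-- Let `U` be a unitary on `K ⊗ H` and `Ū` a (contragredient) unitary on
`K̄ ⊗ H`, and suppose the tensor product `W := U₁₃Ū₂₃` on `(K ⊗ K̄) ⊗ H` admits a net
`(ζᵢ)` of almost invariant unit vectors in `K ⊗ K̄`.  Then any weak-* cluster point `m`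
of the vector states `ω_{ζᵢ,ζᵢ}` on `B(K ⊗ K̄)` satisfies
`m((id ⊗ ω_{v,v})(W (T ⊗ 1) W*)) = ‖v‖² m(T)` for all `T ∈ B(K ⊗ K̄)`, `v ∈ H`. -/
theorem cluster_state_is_invariant_for_tensor_with_conjugate {K Kb H TKH TKbH TP T3 : Type*}
    [NormedAddCommGroup K] [InnerProductSpace ℂ K] [CompleteSpace K]
    [NormedAddCommGroup Kb] [InnerProductSpace ℂ Kb] [CompleteSpace Kb]
    [NormedAddCommGroup H] [InnerProductSpace ℂ H] [CompleteSpace H]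
    [NormedAddCommGroup TKH] [InnerProductSpace ℂ TKH] [CompleteSpace TKH]
    [NormedAddCommGroup TKbH] [InnerProductSpace ℂ TKbH] [CompleteSpace TKbH]
    [NormedAddCommGroup TP] [InnerProductSpace ℂ TP] [CompleteSpace TP]
    [NormedAddCommGroup T3] [InnerProductSpace ℂ T3] [CompleteSpace T3]
    -- models of `K ⊗ H`, `K̄ ⊗ H`, `K ⊗ K̄` and `(K ⊗ K̄) ⊗ H`
    (tmulKH : K →L[ℂ] H →L[ℂ] TKH)
    (hinnerKH : ∀ x v x' v', ⟪tmulKH x v, tmulKH x' v'⟫ = ⟪x, x'⟫ * ⟪v, v'⟫)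
    (hdenseKH : Dense ((Submodule.span ℂ
      (Set.range fun p : K × H => tmulKH p.1 p.2) : Submodule ℂ TKH) : Set TKH))
    (tmulKbH : Kb →L[ℂ] H →L[ℂ] TKbH)
    (hinnerKbH : ∀ y v y' v', ⟪tmulKbH y v, tmulKbH y' v'⟫ = ⟪y, y'⟫ * ⟪v, v'⟫)
    (hdenseKbH : Dense ((Submodule.span ℂ
      (Set.range fun p : Kb × H => tmulKbH p.1 p.2) : Submodule ℂ TKbH) : Set TKbH))
    (tmulP : K →L[ℂ] Kb →L[ℂ] TP)
    (hinnerP : ∀ x y x' y', ⟪tmulP x y, tmulP x' y'⟫ = ⟪x, x'⟫ * ⟪y, y'⟫)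
    (hdenseP : Dense ((Submodule.span ℂ
      (Set.range fun p : K × Kb => tmulP p.1 p.2) : Submodule ℂ TP) : Set TP))
    (tmulBig : TP →L[ℂ] H →L[ℂ] T3)
    (hinnerBig : ∀ s v s' v', ⟪tmulBig s v, tmulBig s' v'⟫ = ⟪s, s'⟫ * ⟪v, v'⟫)
    (hdenseBig : Dense ((Submodule.span ℂ
      (Set.range fun p : TP × H => tmulBig p.1 p.2) : Submodule ℂ T3) : Set T3))
    -- `U` and its contragredient `Ub`
    (U : TKH →L[ℂ] TKH) (hU : U ∈ unitary (TKH →L[ℂ] TKH))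
    (Ub : TKbH →L[ℂ] TKbH) (hUb : Ub ∈ unitary (TKbH →L[ℂ] TKbH))
    -- the legs `U₁₃`, `Ū₂₃` on `K ⊗ K̄ ⊗ H`
    (p13 : TKH →L[ℂ] Kb →L[ℂ] T3)
    (hp13 : ∀ x v y, p13 (tmulKH x v) y = tmulBig (tmulP x y) v)
    (p23 : K →L[ℂ] TKbH →L[ℂ] T3)
    (hp23 : ∀ x y v, p23 x (tmulKbH y v) = tmulBig (tmulP x y) v)
    (U13 : T3 →L[ℂ] T3) (hU13 : ∀ t y, U13 (p13 t y) = p13 (U t) y)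
    (Ub23 : T3 →L[ℂ] T3) (hUb23 : ∀ x t, Ub23 (p23 x t) = p23 x (Ub t))
    -- amplification `T ↦ T ⊗ 1` and slices `(id ⊗ ω_{v,v})`
    (ampl : (TP →L[ℂ] TP) → (T3 →L[ℂ] T3))
    (hampl : ∀ S t v, ampl S (tmulBig t v) = tmulBig (S t) v)
    (slc : H → (T3 →L[ℂ] T3) → (TP →L[ℂ] TP))
    (hslc : ∀ v S t s, ⟪s, slc v S t⟫ = ⟪tmulBig s v, S (tmulBig t v)⟫)
    -- a net of almost invariant unit vectors for `W = U₁₃Ū₂₃`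
    {ι : Type*} (l : Filter ι) [l.NeBot] (ζ : ι → TP) (hζ : ∀ i, ‖ζ i‖ = 1)
    (hinv : ∀ v : H, Filter.Tendsto
      (fun i => ‖(U13 ∘L Ub23) (tmulBig (ζ i) v) - tmulBig (ζ i) v‖) l (nhds 0))
    -- a weak-* cluster point `m` of the vector states `ω_{ζᵢ,ζᵢ}`
    (ω : ι → WeakDual ℂ (TP →L[ℂ] TP))
    (hω : ∀ i (S : TP →L[ℂ] TP), ω i S = ⟪ζ i, S (ζ i)⟫)
    (m : WeakDual ℂ (TP →L[ℂ] TP))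
    (hm : MapClusterPt m l ω) :
    ∀ (S : TP →L[ℂ] TP) (v : H),
      m (slc v ((U13 ∘L Ub23) ∘L ampl S ∘L star (U13 ∘L Ub23)))
        = (‖v‖ : ℂ) ^ 2 * m S :=
  cluster_state_is_invariant_for_tensor_with_conjugate_general tmulKH hinnerKH hdenseKH tmulKbH
    hinnerKbH hdenseKbH tmulP hinnerP hdenseP tmulBig hinnerBig hdenseBig U hU Ub hUb p13 hp13 p23
    hp23 U13 hU13 Ub23 hUb23 ampl hampl slc hslc l ζ hζ hinv ω hω m hm
end
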